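/- Let R be a natural number and let u, v : ℝ² → ℝ be the polynomial functions u(x,y) = Σ_{r=0}^{R} Σ_{s=0}^{r} a_r^s x^{r-s} y^s and v(x,y) = Σ_{r=0}^{R} Σ_{s=0}^{r} A_r^s x^{r-s} y^s with real coefficients satisfying the Cauchy–Riemann equations (∂u/∂x = ∂v/∂y and ∂u/∂y = −∂v/∂x identically on ℝ²). If x, y : ℝ → ℝ are differentiable functions solving ẋ(t) = u(x(t), y(t)) and ẏ(t) = v(x(t), y(t)) for all t, then the complex-valued function z := x + i·y satisfies ż(t) = (a_0^0 + i·A_0^0) + Σ_{r=1}^{R} (a_r^0 − i·a_r^1/r) · z(t)^r for all t. -/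

import Mathlib

/-!
Write `f = u + i v`, a polynomial with coefficients `w r s = a r s + i A r s` (of `x^(r-s) y^s`).
Comparing coefficients, the Cauchy–Riemann equations say exactly that `∂f/∂y = i ∂f/∂x`,
i.e. `(s + 1) w r (s + 1) = i (r - s) w r s`. Hence `w r s = (r choose s) i^s w r 0`, so the
degree-`r` part of `f` is `w r 0 (x + i y)^r` and `ż = f(x, y) = ∑ w r 0 z^r`. The `s = 0`
instance of the second equation, `a r 1 = -r A r 0`, turns `w r 0` into `a r 0 - i a r 1 / r`.
-/

open Finset Complex

theorem Finset.sum_range_triangle_succ_of_diag {M : Type*} [AddCommMonoid M] (N : ℕ)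
    (g : ℕ → ℕ → M) (hg : ∀ r, g r r = 0) :
    ∑ r ∈ range (N + 1), ∑ s ∈ range (r + 1), g r s =
      ∑ r ∈ range N, ∑ s ∈ range (r + 1), g (r + 1) s := by
  rw [sum_range_succ']
  simp [sum_range_succ, hg]

theorem Finset.sum_range_triangle_succ_of_zero {M : Type*} [AddCommMonoid M] (N : ℕ)
    (g : ℕ → ℕ → M) (hg : ∀ r, g r 0 = 0) :
    ∑ r ∈ range (N + 1), ∑ s ∈ range (r + 1), g r s =
      ∑ r ∈ range N, ∑ s ∈ range (r + 1), g (r + 1) (s + 1) := by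
  simp only [sum_range_succ' (g _), hg, add_zero]
  rw [sum_range_succ']
  simp

theorem eq_mul_choose_mul_pow {K : Type*} [Field K] [CharZero K] {n : ℕ} {w : ℕ → K} {c : K}
    (h : ∀ s < n, ((s : K) + 1) * w (s + 1) = ((n - s : ℕ) : K) * c * w s) :
    ∀ s ≤ n, w s = w 0 * n.choose s * c ^ s := by
  intro s hs
  induction s with
  | zero => simp
  | succ s ih =>
    have hchoose : ((s : K) + 1) * n.choose (s + 1) = ((n - s : ℕ) : K) * n.choose s := by
      have := congrArg (Nat.cast : ℕ → K) (Nat.choose_succ_right_eq n s)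
      push_cast at this
      linear_combination this
    apply mul_left_cancel₀ (Nat.cast_add_one_ne_zero s)
    calc ((s : K) + 1) * w (s + 1) = ((n - s : ℕ) : K) * c * w s := h s hs
      _ = ((n - s : ℕ) : K) * n.choose s * (w 0 * c ^ (s + 1)) := by rw [ih (by omega)]; ring
      _ = ((s : K) + 1) * (w 0 * n.choose (s + 1) * c ^ (s + 1)) := by rw [← hchoose]; ring

def bivariatePoly {S : Type*} [CommSemiring S] (N : ℕ) (c : ℕ → ℕ → S) (x y : S) : S :=
  ∑ r ∈ range N, ∑ s ∈ range (r + 1), c r s * x ^ (r - s) * y ^ s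

namespace bivariatePoly

section CommSemiring

variable {S : Type*} [CommSemiring S]

noncomputable def toMvPolynomial (N : ℕ) (c : ℕ → ℕ → S) : MvPolynomial (Fin 2) S :=
  ∑ r ∈ range N, ∑ s ∈ range (r + 1),
    MvPolynomial.monomial (Finsupp.single 0 (r - s) + Finsupp.single 1 s) (c r s)

theorem eval_toMvPolynomial (N : ℕ) (c : ℕ → ℕ → S) (x y : S) :
    MvPolynomial.eval ![x, y] (toMvPolynomial N c) = bivariatePoly N c x y := by
  simp [toMvPolynomial, bivariatePoly, MvPolynomial.eval_monomial,
    Finsupp.prod_add_index', pow_add, mul_assoc]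

theorem single_sub_add_single_eq_iff {r s r' s' : ℕ} (hs : s ≤ r) (hs' : s' ≤ r') :
    (Finsupp.single (0 : Fin 2) (r' - s') + Finsupp.single 1 s' =
      Finsupp.single 0 (r - s) + Finsupp.single 1 s) ↔ r' = r ∧ s' = s := by
  constructor
  · intro h
    have h0 := DFunLike.congr_fun h 0
    have h1 := DFunLike.congr_fun h 1
    simp at h0 h1
    omega
  · rintro ⟨rfl, rfl⟩
    rfl

theorem coeff_toMvPolynomial {N r s : ℕ} (c : ℕ → ℕ → S) (hr : r < N) (hs : s ≤ r) :
    (toMvPolynomial N c).coeff (Finsupp.single 0 (r - s) + Finsupp.single 1 s) = c r s := by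
  simp only [toMvPolynomial, MvPolynomial.coeff_sum, MvPolynomial.coeff_monomial]
  have hcond : ∀ r' ∈ range N, ∀ s' ∈ range (r' + 1),
      (if Finsupp.single (0 : Fin 2) (r' - s') + Finsupp.single 1 s' =
          Finsupp.single 0 (r - s) + Finsupp.single 1 s then c r' s' else 0) =
        if r' = r then (if s' = s then c r' s' else 0) else 0 := by
    intro r' _ s' hs'
    simp only [← ite_and, single_sub_add_single_eq_iff hs (Nat.lt_succ_iff.mp (mem_range.mp hs'))]
  rw [sum_congr rfl fun r' hr' => sum_congr rfl (hcond r' hr')]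
  simp [hr, hs]

theorem eq_sum_pow {N : ℕ} {w : ℕ → ℕ → S} {c : S}
    (hw : ∀ r < N, ∀ s ≤ r, w r s = w r 0 * r.choose s * c ^ s) (x y : S) :
    bivariatePoly N w x y = ∑ r ∈ range N, w r 0 * (x + y * c) ^ r := by
  refine sum_congr rfl fun r hr => ?_
  rw [add_comm x, add_pow, mul_sum]
  refine sum_congr rfl fun s hs => ?_
  rw [hw r (mem_range.mp hr) s (Nat.lt_succ_iff.mp (mem_range.mp hs))]
  ring

def derivFstCoeff (c : ℕ → ℕ → S) (r s : ℕ) : S := ((r + 1 - s : ℕ) : S) * c (r + 1) s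

def derivSndCoeff (c : ℕ → ℕ → S) (r s : ℕ) : S := ((s + 1 : ℕ) : S) * c (r + 1) (s + 1)

end CommSemiring

theorem coeff_eq_of_eq {S : Type*} [CommRing S] [IsDomain S] [Infinite S] {N : ℕ}
    {c d : ℕ → ℕ → S} (h : ∀ x y, bivariatePoly N c x y = bivariatePoly N d x y) :
    ∀ r < N, ∀ s ≤ r, c r s = d r s := by
  have hP : toMvPolynomial N c = toMvPolynomial N d := MvPolynomial.funext fun v => by
    have hv : v = ![v 0, v 1] := by ext i; fin_cases i <;> rfl
    rw [hv, eval_toMvPolynomial, eval_toMvPolynomial, h]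
  intro r hr s hs
  rw [← coeff_toMvPolynomial c hr hs, hP, coeff_toMvPolynomial d hr hs]

theorem neg_coeff {S : Type*} [CommRing S] (N : ℕ) (c : ℕ → ℕ → S) (x y : S) :
    bivariatePoly N (-c) x y = -bivariatePoly N c x y := by
  simp [bivariatePoly, neg_mul]

section Deriv

variable {𝕜 : Type*} [NontriviallyNormedField 𝕜]

theorem hasDerivAt_fst (N : ℕ) (c : ℕ → ℕ → 𝕜) (x y : 𝕜) :
    HasDerivAt (fun t => bivariatePoly (N + 1) c t y)
      (bivariatePoly N (derivFstCoeff c) x y) x := by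
  have h := HasDerivAt.fun_sum (u := range (N + 1)) fun r _ =>
    HasDerivAt.fun_sum (u := range (r + 1)) fun s _ =>
      ((hasDerivAt_pow (r - s) x).const_mul (c r s)).mul_const (y ^ s)
  refine h.congr_deriv ?_
  rw [sum_range_triangle_succ_of_diag _ _ fun r => by simp]
  refine sum_congr rfl fun r _ => sum_congr rfl fun s _ => ?_
  rw [derivFstCoeff, show r + 1 - s - 1 = r - s by omega]
  ring

theorem hasDerivAt_snd (N : ℕ) (c : ℕ → ℕ → 𝕜) (x y : 𝕜) :
    HasDerivAt (fun t => bivariatePoly (N + 1) c x t)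
      (bivariatePoly N (derivSndCoeff c) x y) y := by
  have h := HasDerivAt.fun_sum (u := range (N + 1)) fun r _ =>
    HasDerivAt.fun_sum (u := range (r + 1)) fun s _ =>
      (hasDerivAt_pow s y).const_mul (c r s * x ^ (r - s))
  refine h.congr_deriv ?_
  rw [sum_range_triangle_succ_of_zero _ _ fun r => by simp]
  refine sum_congr rfl fun r _ => sum_congr rfl fun s _ => ?_
  rw [derivSndCoeff, Nat.add_sub_add_right, Nat.add_sub_cancel]
  push_cast
  ring

end Deriv

theorem coeff_eq_mul_choose_mul_pow {K : Type*} [Field K] [CharZero K] {N : ℕ}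
    {w : ℕ → ℕ → K} {c : K}
    (h : ∀ r < N, ∀ s ≤ r, derivSndCoeff w r s = c * derivFstCoeff w r s) :
    ∀ r < N + 1, ∀ s ≤ r, w r s = w r 0 * r.choose s * c ^ s := by
  rintro (_ | r) hr
  · simp
  refine eq_mul_choose_mul_pow fun s hs => ?_
  have := h r (by omega) s (by omega)
  rw [derivSndCoeff, derivFstCoeff, Nat.cast_succ] at this
  rw [this]
  ring

theorem ofReal_add_ofReal_mul_I (N : ℕ) (a A : ℕ → ℕ → ℝ) (x y : ℝ) :
    ((bivariatePoly N a x y : ℝ) : ℂ) + (bivariatePoly N A x y : ℝ) * I =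
      bivariatePoly N (fun r s => (a r s : ℂ) + A r s * I) x y := by
  simp only [bivariatePoly, ofReal_sum, ofReal_mul, ofReal_pow, sum_mul, ← sum_add_distrib]
  refine sum_congr rfl fun r _ => sum_congr rfl fun s _ => ?_
  ring

section CauchyRiemann

variable {N : ℕ} {a A : ℕ → ℕ → ℝ}

theorem derivFstCoeff_eq_of_deriv_eq (h : ∀ x y : ℝ,
    deriv (fun t => bivariatePoly (N + 1) a t y) x =
      deriv (fun t => bivariatePoly (N + 1) A x t) y) :
    ∀ r < N, ∀ s ≤ r, derivFstCoeff a r s = derivSndCoeff A r s :=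
  coeff_eq_of_eq fun x y => by
    rw [← (hasDerivAt_fst N a x y).deriv, ← (hasDerivAt_snd N A x y).deriv, h]

theorem derivSndCoeff_eq_neg_of_deriv_eq_neg (h : ∀ x y : ℝ,
    deriv (fun t => bivariatePoly (N + 1) a x t) y =
      -deriv (fun t => bivariatePoly (N + 1) A t y) x) :
    ∀ r < N, ∀ s ≤ r, derivSndCoeff a r s = -derivFstCoeff A r s :=
  coeff_eq_of_eq (d := -derivFstCoeff A) fun x y => by
    rw [neg_coeff, ← (hasDerivAt_snd N a x y).deriv, ← (hasDerivAt_fst N A x y).deriv, h]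

theorem ofReal_add_ofReal_mul_I_eq_sum_pow
    (h₁ : ∀ r < N, ∀ s ≤ r, derivFstCoeff a r s = derivSndCoeff A r s)
    (h₂ : ∀ r < N, ∀ s ≤ r, derivSndCoeff a r s = -derivFstCoeff A r s) (x y : ℝ) :
    ((bivariatePoly (N + 1) a x y : ℝ) : ℂ) + (bivariatePoly (N + 1) A x y : ℝ) * I =
      ∑ r ∈ range (N + 1), ((a r 0 : ℂ) + A r 0 * I) * (x + y * I) ^ r := by
  rw [ofReal_add_ofReal_mul_I]
  refine eq_sum_pow (coeff_eq_mul_choose_mul_pow fun r hr s hs => ?_) _ _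
  have e₁ := congrArg ofReal (h₁ r hr s hs)
  have e₂ := congrArg ofReal (h₂ r hr s hs)
  simp only [derivFstCoeff, derivSndCoeff, ofReal_mul, ofReal_neg, ofReal_natCast] at e₁ e₂ ⊢
  linear_combination e₂ - I * e₁ - ((r + 1 - s : ℕ) : ℂ) * A (r + 1) s * I_sq

theorem ofReal_add_ofReal_mul_I_eq_sub_I_mul_div
    (h₂ : ∀ r < N, ∀ s ≤ r, derivSndCoeff a r s = -derivFstCoeff A r s) {r : ℕ}
    (hr : r ∈ Icc 1 N) :
    (a r 0 : ℂ) + A r 0 * I = a r 0 - I * a r 1 / r := by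
  obtain ⟨r, rfl⟩ : ∃ r', r = r' + 1 := ⟨r - 1, by grind⟩
  have e := congrArg ofReal (h₂ r (by grind) 0 r.zero_le)
  simp only [derivFstCoeff, derivSndCoeff, ofReal_mul, ofReal_neg, ofReal_natCast] at e
  push_cast at e ⊢
  field_simp
  linear_combination I * e

end CauchyRiemann

end bivariatePoly

open bivariatePoly

/-- If `u`, `v` are bivariate real polynomials satisfying the
Cauchy–Riemann equations and `x`, `y` solve `ẋ = u(x,y)`, `ẏ = v(x,y)`, then
`z := x + i·y` satisfies `ż = (a₀⁰ + i·A₀⁰) + Σ_{r=1}^{R} (a_r⁰ − i·a_r¹/r)·z^r`. -/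
theorem stmt_1 (R : ℕ) (a A : ℕ → ℕ → ℝ) (u v : ℝ → ℝ → ℝ)
    (hu : ∀ x y : ℝ, u x y =
      ∑ r ∈ Finset.range (R + 1), ∑ s ∈ Finset.range (r + 1),
        a r s * x ^ (r - s) * y ^ s)
    (hv : ∀ x y : ℝ, v x y =
      ∑ r ∈ Finset.range (R + 1), ∑ s ∈ Finset.range (r + 1),
        A r s * x ^ (r - s) * y ^ s)
    (hCR1 : ∀ x y : ℝ, deriv (fun t => u t y) x = deriv (fun t => v x t) y)
    (hCR2 : ∀ x y : ℝ, deriv (fun t => u x t) y = - deriv (fun t => v t y) x)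
    (x y : ℝ → ℝ)
    (hx : ∀ t : ℝ, HasDerivAt x (u (x t) (y t)) t)
    (hy : ∀ t : ℝ, HasDerivAt y (v (x t) (y t)) t) :
    ∀ t : ℝ, HasDerivAt (fun s : ℝ => (x s : ℂ) + (y s : ℂ) * Complex.I)
      (((a 0 0 : ℂ) + (A 0 0 : ℂ) * Complex.I)
        + ∑ r ∈ Finset.Icc 1 R,
            ((a r 0 : ℂ) - Complex.I * (a r 1 : ℂ) / (r : ℂ))
              * ((x t : ℂ) + (y t : ℂ) * Complex.I) ^ r) t := by
  obtain rfl : u = bivariatePoly (R + 1) a := funext₂ hu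
  obtain rfl : v = bivariatePoly (R + 1) A := funext₂ hv
  have h₁ := derivFstCoeff_eq_of_deriv_eq hCR1
  have h₂ := derivSndCoeff_eq_neg_of_deriv_eq_neg hCR2
  intro t
  have hz := (hx t).ofReal_comp.add ((hy t).ofReal_comp.mul_const I)
  rwa [ofReal_add_ofReal_mul_I_eq_sum_pow h₁ h₂, Nat.range_succ_eq_Icc_zero,
    ← insert_Icc_add_one_left_eq_Icc (Nat.zero_le R), sum_insert (by simp), zero_add,
    pow_zero, mul_one, sum_congr rfl fun r hr => by
      rw [ofReal_add_ofReal_mul_I_eq_sub_I_mul_div h₂ hr]] at hz
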